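/- arXiv:1801.02587 — 4 statements merged into one kernel-verified Lean document; each statement's English description precedes it below -/
import Mathlib

section
/- A distribution function G is regular in the sense of O'Brien (i.e. G(G_*−) = 1 and lim_{x→G_*−} (1 − G(x−))/(1 − G(x)) = 1, where G_* = sup{x : G(x) < 1}) if and only if for some γ ∈ (0,1) there exists a sequence of real numbers (v_n) such that G(v_n)^n → γ. -/
/-!
Write `p x = 1 - G x` and `q x = 1 - G (x-)`; `G (vₙ)ⁿ → γ ∈ (0, 1)` amounts to
`n p (vₙ) → -log γ`. If `G` is regular, the quantiles `vₙ` of level `1 - 1/n` satisfy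
`p (vₙ) ≤ 1/n ≤ q (vₙ)` and tend to `G_*` from the left, so `q / p → 1` forces `n p (vₙ) → 1`.
Conversely, if `n p (vₙ) → τ > 0`, then for `s > 1` every interval `(r, s r)` with `r > 0` small
contains some `p (vₙ)`, whereas by monotonicity no `p (vₙ)` lies in a jump interval
`(p x, q x)`; hence `q x < s p x` as `x → G_*-`.
-/

open MeasureTheory Filter Topology Set

noncomputable section

/-- Event that the partial maximum `max_{0 ≤ j ≤ n-1} X_j` is at most `x`
(empty maximum interpreted as `-∞`, so the event is everything for `n = 0`). -/
def maxEvent {Ω : Type*} (X : ℕ → Ω → ℝ) (n : ℕ) (x : ℝ) : Set Ω :=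
  {ω | ∀ j < n, X j ω ≤ x}

/-- `G` is a distribution function: nondecreasing, right-continuous, with limits
`0` at `-∞` and `1` at `+∞`. -/
def IsDistFun (G : ℝ → ℝ) : Prop :=
  Monotone G ∧ (∀ x, ContinuousWithinAt G (Set.Ici x) x) ∧
    Tendsto G atBot (nhds 0) ∧ Tendsto G atTop (nhds 1)

/-- `G` is a phantom distribution function for `X` under `P`:
`sup_x |P(M_n ≤ x) - G(x)^n| → 0`. -/
def IsPhantom {Ω : Type*} [MeasurableSpace Ω] (P : Measure Ω) (X : ℕ → Ω → ℝ)
    (G : ℝ → ℝ) : Prop :=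
  Tendsto (fun n => ⨆ x : ℝ, |(P (maxEvent X n x)).toReal - G x ^ n|) atTop (nhds 0)

/-- The right end `G_* = sup {x : G x < 1}`, as an extended real. -/
def GstarE (G : ℝ → ℝ) : EReal := sSup ((fun x : ℝ => (x : EReal)) '' {x | G x < 1})

/-- The filter of real numbers approaching `c ∈ (-∞, +∞]` strictly from the left
(equals `atTop` when `c = ⊤`). -/
def leftFilter (c : EReal) : Filter ℝ :=
  Filter.comap (fun x : ℝ => (x : EReal)) (nhdsWithin c (Set.Iio c))

/-- Regularity in the sense of O'Brien: `G(G_*-) = 1` and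
`(1 - G(x-))/(1 - G(x)) → 1` as `x → G_*-`. -/
def IsRegularDF (G : ℝ → ℝ) : Prop :=
  Tendsto G (leftFilter (GstarE G)) (nhds 1) ∧
    Tendsto (fun x => (1 - Function.leftLim G x) / (1 - G x))
      (leftFilter (GstarE G)) (nhds 1)

open Real

section LeftFilter

variable {c : EReal}

lemma tendsto_leftFilter_iff {α : Type*} {l : Filter α} {f : α → ℝ} :
    Tendsto f l (leftFilter c) ↔
      (∀ x : ℝ, (x : EReal) < c → ∀ᶠ a in l, x < f a) ∧ ∀ᶠ a in l, (f a : EReal) < c := by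
  rw [leftFilter, tendsto_comap_iff, tendsto_nhdsWithin_iff, tendsto_order]
  constructor
  · rintro ⟨⟨hlow, -⟩, hlt⟩
    exact ⟨fun x hx => (hlow x hx).mono fun a ha => EReal.coe_lt_coe_iff.1 ha, hlt⟩
  · rintro ⟨hlow, hlt⟩
    refine ⟨⟨fun y hy => ?_, fun y hy => hlt.mono fun a ha => ha.trans hy⟩, hlt⟩
    obtain ⟨x, hyx, hxc⟩ := EReal.exists_between_coe_real hy
    exact (hlow x hxc).mono fun a ha => hyx.trans (EReal.coe_lt_coe_iff.2 ha)

lemma eventually_lt_leftFilter {x : ℝ} (hx : (x : EReal) < c) :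
    ∀ᶠ y in leftFilter c, x < y :=
  (tendsto_leftFilter_iff.1 tendsto_id).1 x hx

lemma eventually_coe_lt_leftFilter : ∀ᶠ y : ℝ in leftFilter c, (y : EReal) < c :=
  (tendsto_leftFilter_iff.1 tendsto_id).2

lemma leftFilter_neBot (hc : ⊥ < c) : (leftFilter c).NeBot := by
  obtain ⟨x, -, hxc⟩ := EReal.exists_between_coe_real hc
  refine Filter.comap_neBot fun t ht => ?_
  obtain ⟨u, hu, hcu, hut⟩ := mem_nhdsWithin.1 ht
  obtain ⟨l, ⟨-, hlc⟩, hsub⟩ := exists_Ioc_subset_of_mem_nhds' (hu.mem_nhds hcu) hc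
  obtain ⟨y, hly, hyc⟩ := EReal.exists_between_coe_real hlc
  exact ⟨y, hut ⟨hsub ⟨hly, hyc.le⟩, hyc⟩⟩

lemma Monotone.tendsto_leftFilter_nhds_one_iff {G : ℝ → ℝ} (hmono : Monotone G)
    (hle : ∀ x, G x ≤ 1) (hc : ⊥ < c) :
    Tendsto G (leftFilter c) (𝓝 1) ↔ ∀ t < 1, ∃ x : ℝ, (x : EReal) < c ∧ t < G x := by
  have := leftFilter_neBot hc
  constructor
  · intro h t ht
    obtain ⟨x, htx, hxc⟩ := ((h.eventually_const_lt ht).and eventually_coe_lt_leftFilter).exists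
    exact ⟨x, hxc, htx⟩
  · refine fun h => tendsto_order.2 ⟨fun t ht => ?_, fun t ht => Eventually.of_forall
      fun x => (hle x).trans_lt ht⟩
    obtain ⟨x, hxc, htx⟩ := h t ht
    filter_upwards [eventually_lt_leftFilter hxc] with y hxy
    exact htx.trans_le (hmono hxy.le)

end LeftFilter

section GstarE

variable {G : ℝ → ℝ}

lemma coe_le_gstarE {x : ℝ} (hx : G x < 1) : (x : EReal) ≤ GstarE G :=
  le_sSup ⟨x, hx, rfl⟩

lemma Monotone.lt_one_of_coe_lt_gstarE (hmono : Monotone G) {x : ℝ}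
    (hx : (x : EReal) < GstarE G) : G x < 1 := by
  obtain ⟨-, ⟨y, hy, rfl⟩, hxy⟩ := lt_sSup_iff.1 hx
  exact (hmono (EReal.coe_lt_coe_iff.1 hxy).le).trans_lt hy

lemma Monotone.exists_coe_lt_gstarE (hmono : Monotone G)
    (h : ∀ t < 1, ∃ y, t < G y ∧ G y < 1) : ∀ t < 1, ∃ x : ℝ, (x : EReal) < GstarE G ∧ t < G x := by
  intro t ht
  obtain ⟨x, htx, hx1⟩ := h t ht
  obtain ⟨y, hxy, hy1⟩ := h (G x) hx1
  exact ⟨x, (EReal.coe_lt_coe_iff.2 (hmono.reflect_lt hxy)).trans_le (coe_le_gstarE hy1), htx⟩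

namespace IsDistFun

lemma nonneg (hG : IsDistFun G) (x : ℝ) : 0 ≤ G x :=
  le_of_tendsto hG.2.2.1 (eventually_atBot.2 ⟨x, fun _ hy => hG.1 hy⟩)

lemma le_one (hG : IsDistFun G) (x : ℝ) : G x ≤ 1 :=
  ge_of_tendsto hG.2.2.2 (eventually_atTop.2 ⟨x, fun _ hy => hG.1 hy⟩)

lemma bot_lt_gstarE (hG : IsDistFun G) : ⊥ < GstarE G := by
  obtain ⟨x, hx⟩ := (hG.2.2.1.eventually_lt_const one_pos).exists
  exact (EReal.bot_lt_coe x).trans_le (coe_le_gstarE hx)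

end IsDistFun

end GstarE

def quantile (G : ℝ → ℝ) (t : ℝ) : ℝ := sInf {x | t ≤ G x}

section Quantile

variable {G : ℝ → ℝ} {t : ℝ}

lemma Monotone.bddBelow_setOf_le (hmono : Monotone G) (hbot : Tendsto G atBot (𝓝 0))
    (ht : 0 < t) : BddBelow {x | t ≤ G x} := by
  obtain ⟨x₀, hx₀⟩ := (hbot.eventually_lt_const ht).exists
  exact ⟨x₀, fun y hy => le_of_not_gt fun hyx => (hy.trans (hmono hyx.le)).not_gt hx₀⟩

lemma le_apply_quantile (hmono : Monotone G) (hrc : ContinuousWithinAt G (Ici (quantile G t))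
    (quantile G t)) (hne : {x | t ≤ G x}.Nonempty) : t ≤ G (quantile G t) := by
  refine ge_of_tendsto (hrc.mono Ioi_subset_Ici_self) ?_
  filter_upwards [self_mem_nhdsWithin] with y hy
  obtain ⟨x, hx, hxy⟩ := exists_lt_of_csInf_lt hne hy
  exact hx.trans (hmono hxy.le)

lemma leftLim_quantile_le (hmono : Monotone G) (hbdd : BddBelow {x | t ≤ G x}) :
    Function.leftLim G (quantile G t) ≤ t := by
  refine le_of_tendsto (hmono.tendsto_leftLim _) ?_
  filter_upwards [self_mem_nhdsWithin] with y hy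
  exact le_of_not_ge (notMem_of_lt_csInf (s := {x | t ≤ G x}) hy hbdd)

lemma quantile_le (hbdd : BddBelow {x | t ≤ G x}) {x : ℝ} (hx : t ≤ G x) : quantile G t ≤ x :=
  csInf_le hbdd hx

lemma IsDistFun.lt_quantile {G : ℝ → ℝ} (hG : IsDistFun G) (hne : {x | t ≤ G x}.Nonempty)
    {x : ℝ} (hx : G x < t) : x < quantile G t :=
  lt_of_not_ge fun hqx => (le_apply_quantile hG.1 (hG.2.1 _) hne |>.trans (hG.1 hqx)).not_gt hx

end Quantile

lemma tendsto_zero_of_tendsto_nat_mul {f : ℕ → ℝ} {L : ℝ}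
    (h : Tendsto (fun n : ℕ => n * f n) atTop (𝓝 L)) : Tendsto f atTop (𝓝 0) :=
  (h.div_atTop tendsto_natCast_atTop_atTop).congr'
    ((eventually_ne_atTop 0).mono fun _ hn => mul_div_cancel_left₀ _ (Nat.cast_ne_zero.2 hn))

lemma tendsto_nat_mul_one_sub_of_tendsto_pow {a : ℕ → ℝ} {γ : ℝ} (h0 : ∀ n, 0 ≤ a n)
    (hγ : 0 < γ) (h : Tendsto (fun n => a n ^ n) atTop (𝓝 γ)) :
    Tendsto (fun n : ℕ => (n : ℝ) * (1 - a n)) atTop (𝓝 (-log γ)) := by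
  have hpos : ∀ᶠ n in atTop, 0 < a n := by
    filter_upwards [h.eventually_const_lt hγ, eventually_ne_atTop 0] with n hpow hn
    exact (h0 n).lt_of_ne fun h => by rw [← h, zero_pow hn] at hpow; exact hpow.false
  have hlog : Tendsto (fun n : ℕ => (n : ℝ) * log (a n)) atTop (𝓝 (log γ)) :=
    ((continuousAt_log hγ.ne').tendsto.comp h).congr fun n => by simp [log_pow]
  have ha : Tendsto a atTop (𝓝 1) := by
    simpa using ((continuous_exp.tendsto 0).comp (tendsto_zero_of_tendsto_nat_mul hlog)).congr'
      (hpos.mono fun n hn => exp_log hn)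
  -- `1 - 1/a ≤ log a ≤ a - 1` squeezes `n (1 - a)` between `a · (-n log a)` and `-n log a`.
  have hlow := ha.mul hlog.neg
  rw [one_mul] at hlow
  refine tendsto_of_tendsto_of_tendsto_of_le_of_le' hlow hlog.neg ?_ ?_
  · filter_upwards [hpos] with n hn
    have h1 : a n - 1 ≤ a n * log (a n) := by
      have := mul_le_mul_of_nonneg_left (one_sub_inv_le_log_of_pos hn) hn.le
      rwa [mul_sub, mul_one, mul_inv_cancel₀ hn.ne'] at this
    linarith [mul_le_mul_of_nonneg_left h1 n.cast_nonneg']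
  · filter_upwards [hpos] with n hn
    linarith [mul_le_mul_of_nonneg_left (log_le_sub_one_of_pos hn) n.cast_nonneg']

lemma tendsto_nat_mul_nhds_one_of_tendsto_div {p q : ℕ → ℝ} (hp : ∀ᶠ n in atTop, 0 < p n)
    (hpn : ∀ᶠ n : ℕ in atTop, n * p n ≤ 1) (hqn : ∀ᶠ n : ℕ in atTop, 1 ≤ n * q n)
    (h : Tendsto (fun n => q n / p n) atTop (𝓝 1)) :
    Tendsto (fun n : ℕ => n * p n) atTop (𝓝 1) := by
  have hinv := h.inv₀ one_ne_zero
  rw [inv_one] at hinv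
  refine tendsto_of_tendsto_of_tendsto_of_le_of_le' hinv tendsto_const_nhds ?_ hpn
  filter_upwards [hp, hqn] with n hpn hqn
  have hq : 0 < q n := pos_of_mul_pos_right (one_pos.trans_le hqn) n.cast_nonneg'
  rw [inv_div, div_le_iff₀ hq]
  nlinarith

section CeilDiv

variable {c : ℝ}

lemma tendsto_ceil_div_atTop (hc : 0 < c) : Tendsto (fun p : ℝ => ⌈c / p⌉₊) (𝓝[>] 0) atTop :=
  tendsto_nat_ceil_atTop.comp <|
    (tendsto_inv_nhdsGT_zero.const_mul_atTop hc).congr fun p => (div_eq_mul_inv c p).symm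

lemma tendsto_ceil_div_mul (hc : 0 < c) :
    Tendsto (fun p : ℝ => (⌈c / p⌉₊ : ℝ) * p) (𝓝[>] 0) (𝓝 c) := by
  have hup : Tendsto (fun p : ℝ => c + p) (𝓝[>] 0) (𝓝 c) := by
    simpa using ((tendsto_const_nhds (x := c)).add (tendsto_id (x := 𝓝 (0 : ℝ)))).mono_left
      nhdsWithin_le_nhds
  refine tendsto_of_tendsto_of_tendsto_of_le_of_le' tendsto_const_nhds hup ?_ ?_
  · filter_upwards [self_mem_nhdsWithin] with p (hp : 0 < p)
    exact (div_le_iff₀ hp).1 (Nat.le_ceil _)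
  · filter_upwards [self_mem_nhdsWithin] with p (hp : 0 < p)
    have := Nat.ceil_lt_add_one (div_pos hc hp).le
    nlinarith [(div_mul_cancel₀ c hp.ne')]

lemma tendsto_comp_ceil_div_div {a : ℕ → ℝ} {τ : ℝ} (hc : 0 < c)
    (h : Tendsto (fun n : ℕ => n * a n) atTop (𝓝 τ)) :
    Tendsto (fun p => a ⌈c / p⌉₊ / p) (𝓝[>] 0) (𝓝 (τ / c)) := by
  refine ((h.comp (tendsto_ceil_div_atTop hc)).div (tendsto_ceil_div_mul hc) hc.ne').congr' ?_
  filter_upwards [self_mem_nhdsWithin] with p (hp : 0 < p)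
  have hN : (0 : ℝ) < ⌈c / p⌉₊ := Nat.cast_pos.2 (Nat.ceil_pos.2 (div_pos hc hp))
  exact mul_div_mul_left _ _ hN.ne'

lemma eventually_exists_mem_Ioo_mul {a : ℕ → ℝ} {τ s : ℝ} (hτ : 0 < τ)
    (h : Tendsto (fun n : ℕ => n * a n) atTop (𝓝 τ)) (hs : 1 < s) :
    ∀ᶠ p in 𝓝[>] (0 : ℝ), ∃ n, p < a n ∧ a n < s * p := by
  -- With `n = ⌈2τ / ((1 + s) p)⌉`, `aₙ / p → (1 + s) / 2 ∈ (1, s)`.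
  have ht : 0 < (1 + s) / 2 := by linarith
  have hlim := tendsto_comp_ceil_div_div (div_pos hτ ht) h
  rw [div_div_cancel₀ hτ.ne'] at hlim
  filter_upwards [hlim.eventually (Ioo_mem_nhds (a := 1) (b := s) (by linarith) (by linarith)),
    self_mem_nhdsWithin] with p ⟨h1, h2⟩ (hp : 0 < p)
  exact ⟨_, (one_lt_div hp).1 h1, (div_lt_iff₀ hp).1 h2⟩

end CeilDiv

lemma IsDistFun.tendsto_quantile_leftFilter {α : Type*} {l : Filter α} {G : ℝ → ℝ}
    (hG : IsDistFun G) (h1 : Tendsto G (leftFilter (GstarE G)) (𝓝 1)) {t : α → ℝ}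
    (ht : Tendsto t l (𝓝 1)) (ht1 : ∀ᶠ a in l, t a < 1) :
    Tendsto (fun a => quantile G (t a)) l (leftFilter (GstarE G)) := by
  have hhigh := (hG.1.tendsto_leftFilter_nhds_one_iff hG.le_one hG.bot_lt_gstarE).1 h1
  have hwit : ∀ᶠ a in l, ∃ r : ℝ, (r : EReal) < GstarE G ∧ t a ≤ G r :=
    ht1.mono fun a ha => (hhigh _ ha).imp fun r hr => ⟨hr.1, hr.2.le⟩
  refine tendsto_leftFilter_iff.2 ⟨fun x hx => ?_, ?_⟩
  · filter_upwards [ht.eventually_const_lt (hG.1.lt_one_of_coe_lt_gstarE hx), hwit]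
      with a hxa ⟨r, _, hr⟩
    exact hG.lt_quantile ⟨r, hr⟩ hxa
  · filter_upwards [hwit, ht.eventually_const_lt one_pos] with a ⟨r, hrc, hr⟩ hpos
    exact (EReal.coe_le_coe_iff.2 (quantile_le (hG.1.bddBelow_setOf_le hG.2.2.1 hpos) hr)).trans_lt
      hrc

lemma IsDistFun.tendsto_pow_quantile_of_isRegularDF {G : ℝ → ℝ} (hG : IsDistFun G)
    (hreg : IsRegularDF G) :
    Tendsto (fun n : ℕ => G (quantile G (1 - (n : ℝ)⁻¹)) ^ n) atTop (𝓝 (exp (-1))) := by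
  set v := fun n : ℕ => quantile G (1 - (n : ℝ)⁻¹)
  have hlevel : Tendsto (fun n : ℕ => 1 - (n : ℝ)⁻¹) atTop (𝓝 1) := by
    simpa using tendsto_const_nhds.sub (tendsto_inv_atTop_nhds_zero_nat (𝕜 := ℝ))
  have hv : Tendsto v atTop (leftFilter (GstarE G)) :=
    hG.tendsto_quantile_leftFilter hreg.1 hlevel <| (eventually_ne_atTop 0).mono fun n hn => by
      simpa using Nat.pos_of_ne_zero hn
  have hp : ∀ᶠ n in atTop, 0 < 1 - G (v n) :=
    (hv.eventually eventually_coe_lt_leftFilter).mono fun n hn =>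
      sub_pos.2 (hG.1.lt_one_of_coe_lt_gstarE hn)
  have hbdd : ∀ᶠ n : ℕ in atTop, BddBelow {x | 1 - (n : ℝ)⁻¹ ≤ G x} :=
    (hlevel.eventually_const_lt one_pos).mono fun n hn => hG.1.bddBelow_setOf_le hG.2.2.1 hn
  have hpn : ∀ᶠ n : ℕ in atTop, n * (1 - G (v n)) ≤ 1 := by
    filter_upwards [eventually_ne_atTop 0] with n hn
    have hlt : 1 - (n : ℝ)⁻¹ < 1 := sub_lt_self _ (by positivity)
    have hle : 1 - (n : ℝ)⁻¹ ≤ G (v n) := le_apply_quantile hG.1 (hG.2.1 _)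
      ((hG.2.2.2.eventually_const_lt hlt).exists.imp fun _ => le_of_lt)
    have := mul_le_mul_of_nonneg_left (show 1 - G (v n) ≤ (n : ℝ)⁻¹ by linarith) n.cast_nonneg'
    rwa [mul_inv_cancel₀ (Nat.cast_ne_zero.2 hn)] at this
  have hqn : ∀ᶠ n : ℕ in atTop, 1 ≤ n * (1 - Function.leftLim G (v n)) := by
    filter_upwards [hbdd, eventually_ne_atTop 0] with n hb hn
    have hle : Function.leftLim G (v n) ≤ 1 - (n : ℝ)⁻¹ := leftLim_quantile_le hG.1 hb
    have := mul_le_mul_of_nonneg_left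
      (show (n : ℝ)⁻¹ ≤ 1 - Function.leftLim G (v n) by linarith) n.cast_nonneg'
    rwa [mul_inv_cancel₀ (Nat.cast_ne_zero.2 hn)] at this
  have hmul := tendsto_nat_mul_nhds_one_of_tendsto_div hp hpn hqn (hreg.2.comp hv)
  simpa using Real.tendsto_one_add_pow_exp_of_tendsto (g := fun n => -(1 - G (v n)))
    (by simpa only [mul_neg] using hmul.neg)

lemma tendsto_leftLim_ratio_of_tendsto_nat_mul {G : ℝ → ℝ} (hmono : Monotone G)
    (h1 : Tendsto G (leftFilter (GstarE G)) (𝓝 1)) {v : ℕ → ℝ} {τ : ℝ} (hτ : 0 < τ)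
    (hmul : Tendsto (fun n : ℕ => n * (1 - G (v n))) atTop (𝓝 τ)) :
    Tendsto (fun x => (1 - Function.leftLim G x) / (1 - G x)) (leftFilter (GstarE G)) (𝓝 1) := by
  have hlt : ∀ᶠ x in leftFilter (GstarE G), G x < 1 :=
    eventually_coe_lt_leftFilter.mono fun x => hmono.lt_one_of_coe_lt_gstarE
  have hp : Tendsto (fun x => 1 - G x) (leftFilter (GstarE G)) (𝓝[>] 0) :=
    tendsto_nhdsWithin_iff.2
      ⟨by simpa using (tendsto_const_nhds (x := (1 : ℝ))).sub h1, hlt.mono fun x hx => sub_pos.2 hx⟩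
  refine tendsto_order.2 ⟨fun b hb => ?_, fun b hb => ?_⟩
  · filter_upwards [hlt] with x hx
    refine hb.trans_le ((one_le_div (sub_pos.2 hx)).2 ?_)
    linarith [hmono.leftLim_le (le_refl x)]
  · -- The values `1 - G (v n)` avoid the interval `(1 - G x, 1 - G (x-))`, yet one of them lies
    -- in `(1 - G x, b (1 - G x))`.
    filter_upwards [hlt, hp.eventually (eventually_exists_mem_Ioo_mul hτ hmul hb)]
      with x hx ⟨n, hlo, hhi⟩
    have hvx : v n < x := hmono.reflect_lt (by linarith)
    rw [div_lt_iff₀ (sub_pos.2 hx)]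
    linarith [hmono.le_leftLim hvx]

lemma IsDistFun.isRegularDF_of_tendsto_pow {G : ℝ → ℝ} (hG : IsDistFun G) {γ : ℝ}
    (hγ : γ ∈ Ioo 0 1) {v : ℕ → ℝ} (h : Tendsto (fun n => G (v n) ^ n) atTop (𝓝 γ)) :
    IsRegularDF G := by
  have hτ : 0 < -log γ := neg_pos.2 (log_neg hγ.1 hγ.2)
  have hmul := tendsto_nat_mul_one_sub_of_tendsto_pow (fun n => hG.nonneg (v n)) hγ.1 h
  have hG1 : Tendsto (fun n => G (v n)) atTop (𝓝 1) := by
    simpa using (tendsto_const_nhds (x := (1 : ℝ))).sub (tendsto_zero_of_tendsto_nat_mul hmul)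
  have h1 : Tendsto G (leftFilter (GstarE G)) (𝓝 1) := by
    refine (hG.1.tendsto_leftFilter_nhds_one_iff hG.le_one hG.bot_lt_gstarE).2
      (hG.1.exists_coe_lt_gstarE fun t ht => ?_)
    obtain ⟨n, htn, hn⟩ :=
      ((hG1.eventually_const_lt ht).and (hmul.eventually_const_lt hτ)).exists
    exact ⟨v n, htn, sub_pos.1 (pos_of_mul_pos_right hn n.cast_nonneg')⟩
  exact ⟨h1, tendsto_leftLim_ratio_of_tendsto_nat_mul hG.1 h1 hτ hmul⟩

theorem obrien_regularity_characterization (G : ℝ → ℝ) (hG : IsDistFun G) :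
    IsRegularDF G ↔
      ∃ γ ∈ Set.Ioo (0 : ℝ) 1, ∃ v : ℕ → ℝ,
        Tendsto (fun n => G (v n) ^ n) atTop (nhds γ) :=
  ⟨fun hreg => ⟨exp (-1), ⟨exp_pos _, exp_lt_one_iff.2 (by norm_num)⟩, _,
      hG.tendsto_pow_quantile_of_isRegularDF hreg⟩,
    fun ⟨_, hγ, _, hv⟩ => hG.isRegularDF_of_tendsto_pow hγ hv⟩
end
end

section
/- Let {X_j} be an arbitrary sequence of random variables with M_n = max_{0≤j≤n−1} X_j. Suppose {X_j} admits a continuous phantom distribution function G. Then for every β > 0 there exists a nondecreasing sequence of levels (v_n) such that P(M_{⌊nt⌋} ≤ v_n) → exp(−βt) for every t > 0. -/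
open MeasureTheory Filter Topology Set

noncomputable section

/-!
Put `c_n = exp (-β / (n + 1))`. A continuous distribution function takes every value in `(0, 1)`,
and its smallest `c_n`-level `v_n` is nondecreasing in `n` because `c_n` is. Along `m_n = ⌊n t⌋`
the phantom property gives `P(M_{m_n} ≤ v_n) - G(v_n)^{m_n} → 0`, while
`G(v_n)^{m_n} = exp (-β m_n / (n + 1)) → exp (-β t)`.
-/

def levelInf (G : ℝ → ℝ) (c : ℝ) : ℝ := sInf {x | c ≤ G x}

section levelInf

variable {G : ℝ → ℝ} {c : ℝ}

lemma bddBelow_setOf_le_apply (hbot : Tendsto G atBot (𝓝 0)) (hc : 0 < c) :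
    BddBelow {x | c ≤ G x} := by
  obtain ⟨a, ha⟩ := (hbot.eventually (eventually_lt_nhds hc)).exists_forall_of_atBot
  exact ⟨a, fun x hx => le_of_not_ge fun hxa => (ha x hxa).not_ge hx⟩

lemma nonempty_setOf_le_apply (htop : Tendsto G atTop (𝓝 1)) (hc : c < 1) :
    {x | c ≤ G x}.Nonempty :=
  (htop.eventually (eventually_gt_nhds hc)).exists.imp fun _ hx => hx.le

lemma apply_levelInf (hG : Continuous G) (hbot : Tendsto G atBot (𝓝 0))
    (htop : Tendsto G atTop (𝓝 1)) (hc : c ∈ Ioo 0 1) : G (levelInf G c) = c := by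
  have hbdd := bddBelow_setOf_le_apply hbot hc.1
  have hmem : c ≤ G (levelInf G c) :=
    (isClosed_le continuous_const hG).csInf_mem (nonempty_setOf_le_apply htop hc.2) hbdd
  refine le_antisymm ?_ hmem
  have hleft : ∀ᶠ x in 𝓝[<] levelInf G c, G x ≤ c :=
    eventually_nhdsWithin_of_forall fun x hx =>
      le_of_lt (not_le.1 fun hcx => (not_le.2 hx) (csInf_le hbdd hcx))
  exact le_of_tendsto (hG.continuousAt.tendsto.mono_left nhdsWithin_le_nhds) hleft

lemma levelInf_mono (hbot : Tendsto G atBot (𝓝 0)) (htop : Tendsto G atTop (𝓝 1))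
    {c' : ℝ} (hc : 0 < c) (hc' : c' < 1) (hcc' : c ≤ c') : levelInf G c ≤ levelInf G c' :=
  csInf_le_csInf (bddBelow_setOf_le_apply hbot hc) (nonempty_setOf_le_apply htop hc')
    fun _ hx => hcc'.trans hx

end levelInf

lemma exists_monotone_comp_eq_of_continuous {G : ℝ → ℝ} (hG : Continuous G)
    (hbot : Tendsto G atBot (𝓝 0)) (htop : Tendsto G atTop (𝓝 1)) {c : ℕ → ℝ}
    (hc_mono : Monotone c) (hc : ∀ n, c n ∈ Ioo 0 1) :
    ∃ v : ℕ → ℝ, Monotone v ∧ ∀ n, G (v n) = c n :=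
  ⟨fun n => levelInf G (c n),
    fun _ _ hnm => levelInf_mono hbot htop (hc _).1 (hc _).2 (hc_mono hnm),
    fun n => apply_levelInf hG hbot htop (hc n)⟩

lemma IsPhantom.tendsto_sub_pow {Ω : Type*} [MeasurableSpace Ω] {P : Measure Ω}
    [IsProbabilityMeasure P] {X : ℕ → Ω → ℝ} {G : ℝ → ℝ} (hph : IsPhantom P X G)
    (hG0 : ∀ x, 0 ≤ G x) (hG1 : ∀ x, G x ≤ 1) {m : ℕ → ℕ} (hm : Tendsto m atTop atTop)
    (u : ℕ → ℝ) :
    Tendsto (fun n => (P (maxEvent X (m n) (u n))).toReal - G (u n) ^ m n) atTop (𝓝 0) := by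
  have hbdd (k : ℕ) :
      BddAbove (range fun x : ℝ => |(P (maxEvent X k x)).toReal - G x ^ k|) := by
    refine ⟨1, forall_mem_range.2 fun x => abs_sub_le_iff.2 ⟨?_, ?_⟩⟩
    · have hP : (P (maxEvent X k x)).toReal ≤ 1 := measureReal_le_one
      linarith [pow_nonneg (hG0 x) k]
    · linarith [ENNReal.toReal_nonneg (a := P (maxEvent X k x)),
        pow_le_one₀ (n := k) (hG0 x) (hG1 x)]
  exact squeeze_zero_norm (fun n => le_ciSup (hbdd (m n)) (u n)) (hph.comp hm)

lemma tendsto_floor_mul_div_add_one {t : ℝ} (ht : 0 ≤ t) :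
    Tendsto (fun n : ℕ => (⌊(n : ℝ) * t⌋₊ : ℝ) / (n + 1)) atTop (𝓝 t) := by
  have hfloor : Tendsto (fun n : ℕ => (⌊(n : ℝ) * t⌋₊ : ℝ) / n) atTop (𝓝 t) := by
    simpa [Function.comp_def, mul_comm] using
      (tendsto_nat_floor_mul_div_atTop ht).comp (tendsto_natCast_atTop_atTop (R := ℝ))
  have := hfloor.mul (tendsto_natCast_div_add_atTop (1 : ℝ))
  rw [mul_one] at this
  refine this.congr' ?_
  filter_upwards [eventually_ne_atTop 0] with n hn
  field_simp

theorem continuous_phantom_gives_levels_general {Ω : Type*} [MeasurableSpace Ω]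
    (P : Measure Ω) [IsProbabilityMeasure P] (X : ℕ → Ω → ℝ)
    (G : ℝ → ℝ) (hG : IsDistFun G)
    (hGcont : Continuous G) (hph : IsPhantom P X G) :
    ∀ β : ℝ, 0 < β → ∃ v : ℕ → ℝ, Monotone v ∧
      ∀ t : ℝ, 0 < t →
        Tendsto (fun n : ℕ => (P (maxEvent X ⌊(n : ℝ) * t⌋₊ (v n))).toReal)
          atTop (nhds (Real.exp (-β * t))) := by
  intro β hβ
  obtain ⟨hGmono, -, hbot, htop⟩ := hG
  set c : ℕ → ℝ := fun n => Real.exp (-β / (n + 1))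
  have hc_mono : Monotone c := fun n m hnm => by
    simp only [c, neg_div, Real.exp_le_exp, neg_le_neg_iff]
    gcongr
  have hc (n : ℕ) : c n ∈ Ioo 0 1 :=
    ⟨Real.exp_pos _,
      Real.exp_lt_one_iff.2 (div_neg_of_neg_of_pos (neg_lt_zero.2 hβ) (by positivity))⟩
  obtain ⟨v, hv_mono, hGv⟩ :=
    exists_monotone_comp_eq_of_continuous hGcont hbot htop hc_mono hc
  refine ⟨v, hv_mono, fun t ht => ?_⟩
  have hm : Tendsto (fun n : ℕ => ⌊(n : ℝ) * t⌋₊) atTop atTop :=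
    tendsto_nat_floor_atTop.comp (tendsto_natCast_atTop_atTop.atTop_mul_const ht)
  have hpow :
      Tendsto (fun n => G (v n) ^ ⌊(n : ℝ) * t⌋₊) atTop (𝓝 (Real.exp (-β * t))) := by
    have := (Real.continuous_exp.tendsto _).comp
      ((tendsto_floor_mul_div_add_one ht.le).const_mul (-β))
    refine this.congr fun n => ?_
    simp only [Function.comp_apply, hGv, c, ← Real.exp_nat_mul]
    ring_nf
  simpa using (hph.tendsto_sub_pow (hGmono.le_of_tendsto hbot) (hGmono.ge_of_tendsto htop)
    hm v).add hpow

theorem continuous_phantom_gives_levels {Ω : Type*} [MeasurableSpace Ω]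
    (P : Measure Ω) [IsProbabilityMeasure P] (X : ℕ → Ω → ℝ)
    (hX : ∀ j, Measurable (X j)) (G : ℝ → ℝ) (hG : IsDistFun G)
    (hGcont : Continuous G) (hph : IsPhantom P X G) :
    ∀ β : ℝ, 0 < β → ∃ v : ℕ → ℝ, Monotone v ∧
      ∀ t : ℝ, 0 < t →
        Tendsto (fun n : ℕ => (P (maxEvent X ⌊(n : ℝ) * t⌋₊ (v n))).toReal)
          atTop (nhds (Real.exp (-β * t))) :=
  continuous_phantom_gives_levels_general P X G hG hGcont hph
end
end

section
/- Let {X_j} be a sequence of random variables with partial maxima M_n. If there exist β > 0 and a nondecreasing sequence (v_n) such that P(M_{⌊nt⌋} ≤ v_n) → e^{−βt} for all t in a dense subset of (0,∞), then the distribution function G defined by G(x) = 0 for x < v_1, G(x) = e^{−β/n} for v_n ≤ x < v_{n+1}, G(x) = 1 for x ≥ sup_n v_n, is a phantom distribution function for {X_j}, i.e. sup_x |P(M_n ≤ x) − G(x)^n| → 0. -/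
open MeasureTheory Filter Topology Set

noncomputable section

private lemma exp_sub_exp_le' {x y : ℝ} (hx : 0 ≤ x) (hxy : x ≤ y) :
    Real.exp (-x) - Real.exp (-y) ≤ y - x := by
  have h1 : Real.exp (-y) = Real.exp (-x) * Real.exp (-(y-x)) := by
    rw [← Real.exp_add]; ring_nf
  have h2 := Real.add_one_le_exp (-(y-x))
  have h3 : Real.exp (-x) ≤ 1 := Real.exp_le_one_iff.mpr (by linarith)
  have h4 : Real.exp (-(y-x)) ≤ 1 := Real.exp_le_one_iff.mpr (by linarith)
  nlinarith [Real.exp_pos (-x), Real.exp_pos (-(y-x))]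

private lemma exp_neg_le_four_div_sq {a : ℝ} (ha : 0 < a) : Real.exp (-a) ≤ 4 / a^2 := by
  have h3 := Real.add_one_le_exp (a/2)
  have h4 : Real.exp a = Real.exp (a/2) * Real.exp (a/2) := by rw [← Real.exp_add]; ring_nf
  have h5 : a^2/4 ≤ Real.exp a := by nlinarith [Real.exp_pos (a/2)]
  rw [Real.exp_neg, le_div_iff₀ (by positivity), inv_mul_eq_div, div_le_iff₀ (Real.exp_pos a)]
  nlinarith

private lemma gap_le {β : ℝ} (hβ : 0 < β) {n k : ℕ} (hn : 1 ≤ n) (hk : 1 ≤ k) :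
    Real.exp (-(β*n/((k:ℝ)+1))) - Real.exp (-(β*n/(k:ℝ))) ≤ 8/(β*n) := by
  have hk' : (1:ℝ) ≤ (k:ℝ) := by exact_mod_cast hk
  have hn' : (1:ℝ) ≤ (n:ℝ) := by exact_mod_cast hn
  set a := β*(n:ℝ)/((k:ℝ)+1) with hadef
  set d := β*(n:ℝ)/((k:ℝ)*((k:ℝ)+1)) with hddef
  have ha : 0 < a := by positivity
  have hd : 0 < d := by positivity
  have hb : β*(n:ℝ)/(k:ℝ) = a + d := by
    rw [hadef, hddef]; field_simp
  have key : Real.exp (-a) - Real.exp (-(a+d)) ≤ Real.exp (-a) * d := by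
    rw [show -(a+d) = -a + -d by ring, Real.exp_add]
    nlinarith [Real.exp_pos (-a), Real.add_one_le_exp (-d)]
  have hq : Real.exp (-a) ≤ 4 / a^2 := exp_neg_le_four_div_sq ha
  have hda : d * (k:ℝ) = a := by rw [hadef, hddef]; field_simp
  have h7 : 4/a^2*d ≤ 8/(β*n) := by
    rw [div_mul_eq_mul_div, div_le_div_iff₀ (by positivity) (by positivity)]
    have hβn : β*(n:ℝ) = a * ((k:ℝ)+1) := by rw [hadef]; field_simp
    rw [hβn, ← hda]
    nlinarith [mul_nonneg (mul_nonneg (sq_nonneg d) (by positivity : (0:ℝ) ≤ (k:ℝ)))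
      (by linarith : (0:ℝ) ≤ (k:ℝ)-1)]
  have : Real.exp (-a) * d ≤ 4/a^2*d := by nlinarith
  rw [hb]
  linarith


set_option maxHeartbeats 2000000 in
theorem piecewise_is_phantom {Ω : Type*} [MeasurableSpace Ω]
    (P : Measure Ω) [IsProbabilityMeasure P] (X : ℕ → Ω → ℝ)
    (hX : ∀ j, Measurable (X j)) (β : ℝ) (hβ : 0 < β) (v : ℕ → ℝ)
    (hv : Monotone v) (D : Set ℝ) (hD : D ⊆ Set.Ioi (0 : ℝ))
    (hDdense : Set.Ioi (0 : ℝ) ⊆ closure D)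
    (hconv : ∀ t ∈ D,
      Tendsto (fun n : ℕ => (P (maxEvent X ⌊(n : ℝ) * t⌋₊ (v n))).toReal)
        atTop (nhds (Real.exp (-β * t))))
    (G : ℝ → ℝ)
    (hG0 : ∀ x : ℝ, x < v 1 → G x = 0)
    (hGn : ∀ n : ℕ, 1 ≤ n → ∀ x : ℝ, v n ≤ x → x < v (n + 1) →
      G x = Real.exp (-β / n))
    (hG1 : ∀ x : ℝ, (⨆ k, (v k : EReal)) ≤ (x : EReal) → G x = 1) :
    IsPhantom P X G := by
  classical
  show Tendsto (fun n => ⨆ x : ℝ, |(P (maxEvent X n x)).toReal - G x ^ n|) atTop (nhds 0)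
  set F : ℕ → ℝ → ℝ := fun n x => (P (maxEvent X n x)).toReal with hFdef
  have hF0 : ∀ n x, 0 ≤ F n x := fun n x => ENNReal.toReal_nonneg
  have hF1 : ∀ n x, F n x ≤ 1 := by
    intro n x
    have h := measure_mono (μ := P) (Set.subset_univ (maxEvent X n x))
    have h2 := ENNReal.toReal_mono (measure_ne_top P _) h
    simpa [measure_univ] using h2
  have hFx : ∀ n, ∀ x y : ℝ, x ≤ y → F n x ≤ F n y := by
    intro n x y hxy
    exact ENNReal.toReal_mono (measure_ne_top P _)
      (measure_mono (fun ω hω j hj => (hω j hj).trans hxy))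
  have hFn : ∀ x : ℝ, ∀ m n : ℕ, m ≤ n → F n x ≤ F m x := by
    intro x m n hmn
    exact ENNReal.toReal_mono (measure_ne_top P _)
      (measure_mono (fun ω hω j hj => hω j (lt_of_lt_of_le hj hmn)))
  have hpick : ∀ a b : ℝ, 0 < a → a < b → ∃ s ∈ D, a < s ∧ s < b := by
    intro a b ha hab
    have hc0 : (0:ℝ) < (a+b)/2 := by linarith
    have hc : (a+b)/2 ∈ closure D := hDdense hc0
    obtain ⟨y, hy1, hy2⟩ := _root_.mem_closure_iff.mp hc (Set.Ioo a b) isOpen_Ioo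
      ⟨by linarith, by linarith⟩
    exact ⟨y, hy2, hy1.1, hy1.2⟩
  have hA : ∀ t : ℝ, 0 < t →
      Tendsto (fun m : ℕ => F ⌊(m:ℝ) * t⌋₊ (v m)) atTop (nhds (Real.exp (-(β * t)))) := by
    intro t ht
    rw [Metric.tendsto_atTop]
    intro ε hε
    obtain ⟨s, hsD, hs1, hs2⟩ := hpick (max (t/2) (t - ε/(2*β))) t
      (lt_of_lt_of_le (by linarith) (le_max_left _ _))
      (max_lt (by linarith) (by linarith [show (0:ℝ) < ε/(2*β) by positivity]))
    obtain ⟨u, huD, hu1, hu2⟩ := hpick t (t + ε/(2*β)) ht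
      (by linarith [show (0:ℝ) < ε/(2*β) by positivity])
    have hs0 : 0 < s := lt_of_le_of_lt (le_trans (by linarith) (le_max_left (t/2) (t - ε/(2*β)))) hs1
    have hsc : t - s ≤ ε/(2*β) := by
      have := lt_of_le_of_lt (le_max_right (t/2) (t - ε/(2*β))) hs1
      linarith
    have huc : u - t ≤ ε/(2*β) := by linarith
    obtain ⟨Ns, hNs⟩ := Metric.tendsto_atTop.mp (hconv s hsD) (ε/2) (by positivity)
    obtain ⟨Nu, hNu⟩ := Metric.tendsto_atTop.mp (hconv u huD) (ε/2) (by positivity)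
    refine ⟨max Ns Nu, fun m hm => ?_⟩
    have h1 := hNs m (le_trans (le_max_left _ _) hm)
    have h2 := hNu m (le_trans (le_max_right _ _) hm)
    rw [Real.dist_eq] at h1 h2 ⊢
    have hm0 : (0:ℝ) ≤ (m:ℝ) := Nat.cast_nonneg m
    have hfl : F ⌊(m:ℝ)*t⌋₊ (v m) ≤ F ⌊(m:ℝ)*s⌋₊ (v m) :=
      hFn _ _ _ (Nat.floor_mono (mul_le_mul_of_nonneg_left hs2.le hm0))
    have hfu : F ⌊(m:ℝ)*u⌋₊ (v m) ≤ F ⌊(m:ℝ)*t⌋₊ (v m) :=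
      hFn _ _ _ (Nat.floor_mono (mul_le_mul_of_nonneg_left hu1.le hm0))
    have he1 : Real.exp (-(β*s)) - Real.exp (-(β*t)) ≤ ε/2 := by
      have := exp_sub_exp_le' (x := β*s) (y := β*t) (by positivity)
        (by nlinarith)
      have h3 : β*t - β*s ≤ ε/2 := by
        have : β*(t-s) ≤ β*(ε/(2*β)) := by nlinarith
        have hb2 : β*(ε/(2*β)) = ε/2 := by field_simp
        nlinarith
      linarith
    have he2 : Real.exp (-(β*t)) - Real.exp (-(β*u)) ≤ ε/2 := by
      have := exp_sub_exp_le' (x := β*t) (y := β*u) (by positivity)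
        (by nlinarith)
      have h3 : β*u - β*t ≤ ε/2 := by
        have : β*(u-t) ≤ β*(ε/(2*β)) := by nlinarith
        have hb2 : β*(ε/(2*β)) = ε/2 := by field_simp
        nlinarith
      linarith
    have hcs : |F ⌊(m:ℝ)*s⌋₊ (v m) - Real.exp (-β*s)| < ε/2 := h1
    have hcu : |F ⌊(m:ℝ)*u⌋₊ (v m) - Real.exp (-β*u)| < ε/2 := h2
    rw [abs_lt]
    rw [abs_lt] at hcs hcu
    rw [neg_mul] at hcs hcu
    constructor <;> [linarith; linarith]
  have hB : ∀ ε : ℝ, 0 < ε → ∃ N : ℕ, ∀ n, N ≤ n → ∀ k : ℕ, 1 ≤ k →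
      |F n (v k) - Real.exp (-(β*n/k))| ≤ ε := by
    intro ε hε
    set δ := ε/(3*β) with hδdef
    have hδ : 0 < δ := by positivity
    have hβδ : β*δ = ε/3 := by rw [hδdef]; field_simp
    set r := ⌈(Real.log (3/ε) / β) / δ⌉₊ + 1 with hrdef
    have hr1 : 1 ≤ r := Nat.le_add_left 1 _
    have hrδ : Real.exp (-(β*((r:ℝ)*δ))) ≤ ε/3 := by
      have h1 : Real.log (3/ε)/β/δ ≤ (r:ℝ) := by
        have := Nat.le_ceil (Real.log (3/ε)/β/δ)
        rw [hrdef]; push_cast; linarith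
      have h2 : Real.log (3/ε) ≤ β*((r:ℝ)*δ) := by
        rw [div_le_iff₀ hδ, div_le_iff₀ hβ] at h1
        nlinarith
      calc Real.exp (-(β*((r:ℝ)*δ))) ≤ Real.exp (-(Real.log (3/ε))) :=
            Real.exp_le_exp.mpr (by linarith)
        _ = ε/3 := by rw [Real.exp_neg, Real.exp_log (by positivity), inv_div]
    have hsim : ∀ᶠ m : ℕ in atTop, ∀ i ∈ Finset.Icc 1 r,
        |F ⌊(m:ℝ)*((i:ℝ)*δ)⌋₊ (v m) - Real.exp (-(β*((i:ℝ)*δ)))| ≤ ε/3 := by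
      rw [Filter.eventually_all_finset]
      intro i hi
      have hi1 : 1 ≤ i := (Finset.mem_Icc.mp hi).1
      have hipos : 0 < (i:ℝ)*δ := by
        have h : (1:ℝ) ≤ (i:ℝ) := by exact_mod_cast hi1
        nlinarith
      have h := (hA ((i:ℝ)*δ) hipos).eventually
        (Metric.closedBall_mem_nhds _ (by positivity : (0:ℝ) < ε/3))
      simpa [Metric.mem_closedBall, Real.dist_eq] using h
    obtain ⟨M, hM⟩ := Filter.eventually_atTop.mp hsim
    set M' := max M 1 with hM'def
    have hM'1 : 1 ≤ M' := le_max_right _ _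
    have hM'0 : (0:ℝ) < (M':ℝ) := by exact_mod_cast hM'1
    have hbig : ∀ n : ℕ, ∀ k : ℕ, M' ≤ k →
        |F n (v k) - Real.exp (-(β*n/k))| ≤ 2*ε/3 := by
      intro n k hk
      have hkM : M ≤ k := le_trans (le_max_left _ _) hk
      have hk1 : 1 ≤ k := le_trans (le_max_right _ _) hk
      have hk0 : (0:ℝ) < (k:ℝ) := by exact_mod_cast hk1
      have hEone : Real.exp (-(β*(n:ℝ)/(k:ℝ))) ≤ 1 :=
        Real.exp_le_one_iff.mpr (neg_nonpos.mpr (by positivity))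
      by_cases hc1 : (n:ℝ) < (k:ℝ)*δ
      · have h1 := hM k hkM 1 (Finset.mem_Icc.mpr ⟨le_refl 1, hr1⟩)
        norm_num at h1
        have h1a := abs_le.mp h1
        have hnle : n ≤ ⌊(k:ℝ)*δ⌋₊ := Nat.le_floor (by nlinarith)
        have h2 : F ⌊(k:ℝ)*δ⌋₊ (v k) ≤ F n (v k) := hFn _ _ _ hnle
        have h3 : 1 - ε/3 ≤ Real.exp (-(β*δ)) := by
          have h4 := Real.add_one_le_exp (-(β*δ))
          linarith
        have h4 : Real.exp (-(β*δ)) ≤ Real.exp (-(β*(n:ℝ)/(k:ℝ))) := by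
          apply Real.exp_le_exp.mpr
          have h5 : β*(n:ℝ)/(k:ℝ) ≤ β*δ := by rw [div_le_iff₀ hk0]; nlinarith
          linarith
        rw [abs_le]
        constructor
        · linarith [hF1 n (v k)]
        · linarith [hF1 n (v k)]
      · by_cases hc2 : (k:ℝ)*((r:ℝ)*δ) ≤ (n:ℝ)
        · have h1 := hM k hkM r (Finset.mem_Icc.mpr ⟨hr1, le_refl r⟩)
          have h1a := abs_le.mp h1
          have hfl : ⌊(k:ℝ)*((r:ℝ)*δ)⌋₊ ≤ n := by
            have h := Nat.floor_mono hc2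
            rwa [Nat.floor_natCast] at h
          have h2 : F n (v k) ≤ F ⌊(k:ℝ)*((r:ℝ)*δ)⌋₊ (v k) := hFn _ _ _ hfl
          have h4 : Real.exp (-(β*(n:ℝ)/(k:ℝ))) ≤ Real.exp (-(β*((r:ℝ)*δ))) := by
            apply Real.exp_le_exp.mpr
            have h5 : β*((r:ℝ)*δ) ≤ β*(n:ℝ)/(k:ℝ) := by rw [le_div_iff₀ hk0]; nlinarith
            linarith
          rw [abs_le]
          have h6 := hF0 n (v k)
          have h7 := (Real.exp_pos (-(β*(n:ℝ)/(k:ℝ)))).le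
          constructor
          · linarith [hrδ]
          · linarith [hrδ]
        · push_neg at hc1 hc2
          set i := ⌊(n:ℝ)/((k:ℝ)*δ)⌋₊ with hidef
          have hkδ : 0 < (k:ℝ)*δ := by positivity
          have hi1 : 1 ≤ i := Nat.le_floor (by rw [Nat.cast_one, le_div_iff₀ hkδ]; nlinarith)
          have hilt : i < r := by
            rw [hidef, Nat.floor_lt (by positivity), div_lt_iff₀ hkδ]
            nlinarith
          have hfl : ((i:ℝ)) ≤ (n:ℝ)/((k:ℝ)*δ) := Nat.floor_le (by positivity)
          have hfu : (n:ℝ)/((k:ℝ)*δ) < (i:ℝ)+1 := Nat.lt_floor_add_one _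
          rw [le_div_iff₀ hkδ] at hfl
          rw [div_lt_iff₀ hkδ] at hfu
          have hkin : (k:ℝ)*((i:ℝ)*δ) ≤ (n:ℝ) := by nlinarith
          have hkin1 : (n:ℝ) < (k:ℝ)*(((i:ℝ)+1)*δ) := by nlinarith
          have h1 := hM k hkM i (Finset.mem_Icc.mpr ⟨hi1, hilt.le⟩)
          have h2 := hM k hkM (i+1) (Finset.mem_Icc.mpr ⟨by omega, by omega⟩)
          push_cast at h2
          have h1a := abs_le.mp h1
          have h2a := abs_le.mp h2
          have hfl2 : ⌊(k:ℝ)*((i:ℝ)*δ)⌋₊ ≤ n := by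
            have h := Nat.floor_mono hkin
            rwa [Nat.floor_natCast] at h
          have hfu2 : n ≤ ⌊(k:ℝ)*(((i:ℝ)+1)*δ)⌋₊ := Nat.le_floor hkin1.le
          have hs1 : F n (v k) ≤ F ⌊(k:ℝ)*((i:ℝ)*δ)⌋₊ (v k) := hFn _ _ _ hfl2
          have hs2 : F ⌊(k:ℝ)*(((i:ℝ)+1)*δ)⌋₊ (v k) ≤ F n (v k) := hFn _ _ _ hfu2
          have hE1 : Real.exp (-(β*(((i:ℝ)+1)*δ))) ≤ Real.exp (-(β*(n:ℝ)/(k:ℝ))) := by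
            apply Real.exp_le_exp.mpr
            have h5 : β*(n:ℝ)/(k:ℝ) ≤ β*(((i:ℝ)+1)*δ) := by rw [div_le_iff₀ hk0]; nlinarith
            linarith
          have hE2 : Real.exp (-(β*(n:ℝ)/(k:ℝ))) ≤ Real.exp (-(β*((i:ℝ)*δ))) := by
            apply Real.exp_le_exp.mpr
            have h5 : β*((i:ℝ)*δ) ≤ β*(n:ℝ)/(k:ℝ) := by rw [le_div_iff₀ hk0]; nlinarith
            linarith
          have hgap : Real.exp (-(β*((i:ℝ)*δ))) - Real.exp (-(β*(((i:ℝ)+1)*δ))) ≤ ε/3 := by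
            have h := exp_sub_exp_le' (x := β*((i:ℝ)*δ)) (y := β*(((i:ℝ)+1)*δ))
              (by positivity) (by nlinarith)
            have h5 : β*(((i:ℝ)+1)*δ) - β*((i:ℝ)*δ) = β*δ := by ring
            linarith
          rw [abs_le]
          constructor
          · linarith
          · linarith
    set N₀ := ⌈(M':ℝ) * (Real.log (3/ε)/β)⌉₊ + 1 with hN₀def
    refine ⟨N₀, fun n hn k hk1 => ?_⟩
    by_cases hkM' : M' ≤ k
    · exact le_trans (hbig n k hkM') (by linarith)
    · push_neg at hkM'
      have hkM'' : (k:ℝ) ≤ (M':ℝ) := by exact_mod_cast hkM'.le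
      have hk0 : (0:ℝ) < (k:ℝ) := by exact_mod_cast hk1
      have hnn : (M':ℝ) * (Real.log (3/ε)/β) ≤ (n:ℝ) := by
        have h := Nat.le_ceil ((M':ℝ) * (Real.log (3/ε)/β))
        have h2 : (N₀:ℝ) ≤ (n:ℝ) := by exact_mod_cast hn
        rw [hN₀def] at h2
        push_cast at h2
        linarith
      have hlogn : Real.log (3/ε) ≤ β*(n:ℝ)/(M':ℝ) := by
        rw [le_div_iff₀ hM'0]
        have h := mul_le_mul_of_nonneg_left hnn hβ.le
        have h2 : β*((M':ℝ)*(Real.log (3/ε)/β)) = Real.log (3/ε)*(M':ℝ) := by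
          field_simp
        linarith
      have hEM : Real.exp (-(β*(n:ℝ)/(M':ℝ))) ≤ ε/3 := by
        calc Real.exp (-(β*(n:ℝ)/(M':ℝ))) ≤ Real.exp (-(Real.log (3/ε))) :=
              Real.exp_le_exp.mpr (by linarith)
          _ = ε/3 := by rw [Real.exp_neg, Real.exp_log (by positivity), inv_div]
      have h1 := abs_le.mp (hbig n M' (le_refl M'))
      have h2 : F n (v k) ≤ F n (v M') := hFx n _ _ (hv hkM'.le)
      have h3 : Real.exp (-(β*(n:ℝ)/(k:ℝ))) ≤ Real.exp (-(β*(n:ℝ)/(M':ℝ))) := by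
        apply Real.exp_le_exp.mpr
        have h5 : β*(n:ℝ)/(M':ℝ) ≤ β*(n:ℝ)/(k:ℝ) := by
          rw [div_le_div_iff₀ hM'0 hk0]
          have := mul_le_mul_of_nonneg_left hkM'' (by positivity : (0:ℝ) ≤ β*(n:ℝ))
          nlinarith
        linarith
      rw [abs_le]
      have h6 := hF0 n (v k)
      have h7 := (Real.exp_pos (-(β*(n:ℝ)/(k:ℝ)))).le
      constructor
      · linarith
      · linarith
  rw [Metric.tendsto_atTop]
  intro ε' hε'
  set ε := ε'/2 with hεdef
  have hε : 0 < ε := by positivity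
  obtain ⟨N₁, hN₁⟩ := hB (ε/3) (by positivity)
  set N₂ := ⌈24/(β*ε)⌉₊ + 1 with hN₂def
  set N₃ := ⌈Real.log (3/ε)/β⌉₊ + 1 with hN₃def
  refine ⟨max (max N₁ N₂) (max N₃ 1), fun n hn => ?_⟩
  have hn1 : 1 ≤ n := le_trans (le_max_right N₃ 1) (le_trans (le_max_right _ _) hn)
  have hnN₁ : N₁ ≤ n := le_trans (le_max_left _ _) (le_trans (le_max_left _ _) hn)
  have hnN₂ : N₂ ≤ n := le_trans (le_max_right _ _) (le_trans (le_max_left _ _) hn)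
  have hnN₃ : N₃ ≤ n := le_trans (le_max_left _ _) (le_trans (le_max_right _ _) hn)
  have hn0 : (0:ℝ) < (n:ℝ) := by exact_mod_cast hn1
  have hgapn : 8/(β*(n:ℝ)) ≤ ε/3 := by
    have h1 : 24/(β*ε) ≤ (n:ℝ) := by
      have h := Nat.le_ceil (24/(β*ε))
      have h2 : (N₂:ℝ) ≤ (n:ℝ) := by exact_mod_cast hnN₂
      rw [hN₂def] at h2
      push_cast at h2
      linarith
    rw [div_le_div_iff₀ (by positivity) (by norm_num : (0:ℝ) < 3)]
    rw [div_le_iff₀ (by positivity)] at h1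
    nlinarith
  have hexpN₃ : Real.exp (-(β*(n:ℝ))) ≤ ε/3 := by
    have h1 : Real.log (3/ε)/β ≤ (n:ℝ) := by
      have h := Nat.le_ceil (Real.log (3/ε)/β)
      have h2 : (N₃:ℝ) ≤ (n:ℝ) := by exact_mod_cast hnN₃
      rw [hN₃def] at h2
      push_cast at h2
      linarith
    have h2 : Real.log (3/ε) ≤ β*(n:ℝ) := by
      rw [div_le_iff₀ hβ] at h1
      nlinarith
    calc Real.exp (-(β*(n:ℝ))) ≤ Real.exp (-(Real.log (3/ε))) :=
          Real.exp_le_exp.mpr (by linarith)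
      _ = ε/3 := by rw [Real.exp_neg, Real.exp_log (by positivity), inv_div]
  have key : ∀ x : ℝ, |F n x - G x ^ n| ≤ ε := by
    intro x
    by_cases hx1 : x < v 1
    · rw [hG0 x hx1, zero_pow (by omega : n ≠ 0), sub_zero, abs_of_nonneg (hF0 n x)]
      have h1 : F n x ≤ F n (v 1) := hFx n _ _ hx1.le
      have h2 := hN₁ n hnN₁ 1 (le_refl 1)
      norm_num at h2
      have h2a := abs_le.mp h2
      linarith [hexpN₃, h2a.2]
    · push_neg at hx1
      by_cases hxall : ∀ k : ℕ, v k ≤ x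
      · rw [hG1 x (iSup_le fun k => EReal.coe_le_coe_iff.mpr (hxall k)), one_pow]
        set k₀ := max 1 ⌈3*β*(n:ℝ)/ε⌉₊ with hk₀def
        have hk₀1 : 1 ≤ k₀ := le_max_left _ _
        have hk₀0 : (0:ℝ) < (k₀:ℝ) := by exact_mod_cast lt_of_lt_of_le one_pos hk₀1
        have hk₀ : 3*β*(n:ℝ)/ε ≤ (k₀:ℝ) := by
          have h := Nat.le_ceil (3*β*(n:ℝ)/ε)
          have h2 : ((⌈3*β*(n:ℝ)/ε⌉₊ : ℕ):ℝ) ≤ (k₀:ℝ) := by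
            exact_mod_cast le_max_right 1 ⌈3*β*(n:ℝ)/ε⌉₊
          linarith
        have h2 := abs_le.mp (hN₁ n hnN₁ k₀ hk₀1)
        have h3 : 1 - ε/3 ≤ Real.exp (-(β*(n:ℝ)/(k₀:ℝ))) := by
          have h4 := Real.add_one_le_exp (-(β*(n:ℝ)/(k₀:ℝ)))
          have h5 : β*(n:ℝ)/(k₀:ℝ) ≤ ε/3 := by
            rw [div_le_iff₀ hk₀0]
            rw [div_le_iff₀ hε] at hk₀
            nlinarith
          linarith
        have h6 : F n (v k₀) ≤ F n x := hFx n _ _ (hxall k₀)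
        rw [abs_le]
        constructor
        · linarith [h2.1]
        · linarith [hF1 n x]
      · push_neg at hxall
        have hex : ∃ j, x < v j := hxall
        set m := Nat.find hex with hmdef
        have hmspec : x < v m := Nat.find_spec hex
        have hm2 : 2 ≤ m := by
          by_contra h
          push_neg at h
          exact absurd hmspec (not_lt.mpr ((hv (by omega : m ≤ 1)).trans hx1))
        set k := m - 1 with hkdef
        have hk1 : 1 ≤ k := by omega
        have hkm : k + 1 = m := by omega
        have hvk : v k ≤ x := not_lt.mp (Nat.find_min hex (by omega : k < m))
        have hvk1 : x < v (k+1) := by rw [hkm]; exact hmspec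
        rw [hGn k hk1 x hvk hvk1]
        have hpow : Real.exp (-β/(k:ℝ)) ^ n = Real.exp (-(β*(n:ℝ)/(k:ℝ))) := by
          rw [← Real.exp_nat_mul]
          congr 1
          ring
        rw [hpow]
        have h2 := abs_le.mp (hN₁ n hnN₁ k hk1)
        have h3 := hN₁ n hnN₁ (k+1) (by omega)
        push_cast at h3
        have h3a := abs_le.mp h3
        have h4 : F n (v k) ≤ F n x := hFx n _ _ hvk
        have h5 : F n x ≤ F n (v (k+1)) := hFx n _ _ hvk1.le
        have hgap := gap_le (β := β) hβ hn1 hk1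
        rw [abs_le]
        constructor
        · linarith [h2.1]
        · linarith [h3a.2, hgap, hgapn]
  have hbdd : BddAbove (Set.range fun x : ℝ => |F n x - G x ^ n|) := by
    refine ⟨ε, ?_⟩
    rintro y ⟨x, rfl⟩
    exact key x
  have hsup_le : (⨆ x : ℝ, |F n x - G x ^ n|) ≤ ε := Real.iSup_le key hε.le
  have hsup_ge : (0:ℝ) ≤ ⨆ x : ℝ, |F n x - G x ^ n| :=
    le_ciSup_of_le hbdd 0 (abs_nonneg _)
  rw [Real.dist_eq, sub_zero, abs_of_nonneg hsup_ge]
  linarith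
end
end

section
/- Suppose G and H are distribution functions with sup_x |G(x)^n − H(x)^n| → 0 as n → ∞, and with common right end G_* = H_* = sup{x : G(x) < 1} = sup{x : H(x) < 1}. If additionally G is continuous and G(G_*−) = 1, then (1 − H(x))/(1 − G(x)) → 1 as x → G_*− (tail equivalence). -/
open MeasureTheory Filter Topology Set

noncomputable section

/-- The slope limit of `log` at `1`. -/
lemma log_slope_limit :
    Tendsto (fun y : ℝ => Real.log y / (y - 1)) (𝓝[≠] (1:ℝ)) (𝓝 1) := by
  have h := (Real.hasDerivAt_log one_ne_zero)
  rw [hasDerivAt_iff_tendsto_slope] at h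
  simp only [slope_fun_def_field, Real.log_one, sub_zero, inv_one] at h
  exact h

theorem tail_equivalence_of_power_equivalence (G H : ℝ → ℝ)
    (hG : IsDistFun G) (hH : IsDistFun H)
    (hpow : Tendsto (fun n => ⨆ x : ℝ, |G x ^ n - H x ^ n|) atTop (nhds 0))
    (hends : GstarE G = GstarE H) (hGc : Continuous G)
    (hGlim : Tendsto G (leftFilter (GstarE G)) (nhds 1)) :
    Tendsto (fun x => (1 - H x) / (1 - G x)) (leftFilter (GstarE G))
      (nhds 1) := by
  obtain ⟨hGmono, -, hGbot, hGtop⟩ := hG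
  obtain ⟨hHmono, -, hHbot, hHtop⟩ := hH
  set F := leftFilter (GstarE G) with hFdef
  -- basic bounds
  have hG1 : ∀ x, G x ≤ 1 := fun x =>
    ge_of_tendsto hGtop (eventually_atTop.2 ⟨x, fun y hy => hGmono hy⟩)
  have hH0 : ∀ x, 0 ≤ H x := fun x =>
    le_of_tendsto hHbot (eventually_atBot.2 ⟨x, fun y hy => hHmono hy⟩)
  have hG0 : ∀ x, 0 ≤ G x := fun x =>
    le_of_tendsto hGbot (eventually_atBot.2 ⟨x, fun y hy => hGmono hy⟩)
  have hH1 : ∀ x, H x ≤ 1 := fun x =>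
    ge_of_tendsto hHtop (eventually_atTop.2 ⟨x, fun y hy => hHmono hy⟩)
  -- eventually G x < 1
  have hevlt : ∀ᶠ x in F, G x < 1 := by
    have h2 : ∀ᶠ x : ℝ in F, ((x : EReal) < GstarE G) := by
      have hmem : (fun x : ℝ => (x : EReal)) ⁻¹' (Iio (GstarE G)) ∈ F :=
        preimage_mem_comap self_mem_nhdsWithin
      exact hmem
    refine h2.mono (fun x hx => ?_)
    rw [GstarE, lt_sSup_iff] at hx
    obtain ⟨b, ⟨y, hy, rfl⟩, hxy⟩ := hx
    have hxy' : x < y := by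
      have : (x : EReal) < (y : EReal) := hxy
      exact_mod_cast this
    exact lt_of_le_of_lt (hGmono hxy'.le) hy
  have hGto1 : Tendsto G F (𝓝 1) := hGlim
  have h1G : Tendsto (fun x => 1 - G x) F (𝓝 0) := by
    have := (tendsto_const_nhds : Tendsto (fun _ : ℝ => (1:ℝ)) F (𝓝 1)).sub hGto1
    simpa using this
  -- the index function
  set n : ℝ → ℕ := fun x => ⌈(1 - G x)⁻¹⌉₊ with hn
  have hkey : ∀ᶠ x in F, 1 ≤ (n x : ℝ) * (1 - G x) ∧
      (n x : ℝ) * (1 - G x) ≤ 1 + (1 - G x) := by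
    refine hevlt.mono (fun x hx => ?_)
    have ht : 0 < 1 - G x := by linarith
    constructor
    · have := Nat.le_ceil (1 - G x)⁻¹
      calc (1:ℝ) = (1 - G x)⁻¹ * (1 - G x) := by field_simp
        _ ≤ (n x : ℝ) * (1 - G x) := by
            exact mul_le_mul_of_nonneg_right this ht.le
    · have h2 : (n x : ℝ) < (1 - G x)⁻¹ + 1 :=
        Nat.ceil_lt_add_one (by positivity)
      have := mul_le_mul_of_nonneg_right h2.le ht.le
      calc (n x : ℝ) * (1 - G x) ≤ ((1 - G x)⁻¹ + 1) * (1 - G x) := this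
        _ = 1 + (1 - G x) := by field_simp
  -- n(1-G) → 1
  have hn1G : Tendsto (fun x => (n x : ℝ) * (1 - G x)) F (𝓝 1) := by
    refine tendsto_of_tendsto_of_tendsto_of_le_of_le' tendsto_const_nhds
      (by simpa using tendsto_const_nhds.add h1G) (hkey.mono fun x h => h.1)
      (hkey.mono fun x h => h.2)
  -- n → ∞
  have hinvtop : Tendsto (fun x => (1 - G x)⁻¹) F atTop := by
    refine tendsto_inv_nhdsGT_zero.comp ?_
    rw [tendsto_nhdsWithin_iff]
    exact ⟨h1G, hevlt.mono fun x hx => by simp; linarith⟩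
  have hntop : Tendsto n F atTop := by
    rw [← tendsto_natCast_atTop_iff (R := ℝ)]
    exact tendsto_atTop_mono (fun x => Nat.le_ceil _) hinvtop
  -- G x ≠ 1 eventually, compose with slope limit
  have hGslope : Tendsto (fun x => Real.log (G x) / (G x - 1)) F (𝓝 1) := by
    refine log_slope_limit.comp ?_
    rw [tendsto_nhdsWithin_iff]
    exact ⟨hGto1, hevlt.mono fun x hx => ne_of_lt hx⟩
  -- n log G → -1
  have hnlogG : Tendsto (fun x => (n x : ℝ) * Real.log (G x)) F (𝓝 (-1)) := by
    have h := (hn1G.mul hGslope).neg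
    rw [show -((1:ℝ) * 1) = -1 by ring] at h
    refine h.congr' (hevlt.mono fun x hx => ?_)
    have : G x - 1 ≠ 0 := by intro h0; linarith
    field_simp
    ring
  -- G x > 0 eventually
  have hGposev : ∀ᶠ x in F, (0:ℝ) < G x :=
    (hGto1.eventually (eventually_gt_nhds (by norm_num : (0:ℝ) < 1))).mono
      fun x hx => hx
  -- G^n → e⁻¹
  have hGpow : Tendsto (fun x => G x ^ n x) F (𝓝 (Real.exp (-1))) := by
    have h := (Real.continuous_exp.tendsto _).comp hnlogG
    refine h.congr' (hGposev.mono fun x hx => ?_)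
    simp only [Function.comp]
    rw [Real.exp_nat_mul, Real.exp_log hx]
  -- transfer to H via the uniform bound
  have hbdd : ∀ m : ℕ, BddAbove (Set.range fun x => |G x ^ m - H x ^ m|) := by
    intro m
    refine ⟨1, fun r ⟨x, hx⟩ => ?_⟩
    rw [← hx, abs_sub_le_iff]
    have h1 : G x ^ m ≤ 1 := pow_le_one₀ (hG0 x) (hG1 x)
    have h2 : H x ^ m ≤ 1 := pow_le_one₀ (hH0 x) (hH1 x)
    have h3 : 0 ≤ G x ^ m := pow_nonneg (hG0 x) m
    have h4 : 0 ≤ H x ^ m := pow_nonneg (hH0 x) m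
    constructor <;> linarith
  have herr : Tendsto (fun x => G x ^ n x - H x ^ n x) F (𝓝 0) := by
    refine squeeze_zero_norm (fun x => ?_) (hpow.comp hntop)
    exact le_ciSup (hbdd (n x)) x
  have hHpow : Tendsto (fun x => H x ^ n x) F (𝓝 (Real.exp (-1))) := by
    have := hGpow.sub herr
    simpa using this
  -- eventually n ≥ 1 and H x ^ n x > 0, hence H x > 0
  have hn1 : ∀ᶠ x in F, 1 ≤ n x := hntop.eventually_ge_atTop 1
  have hHnpos : ∀ᶠ x in F, (0:ℝ) < H x ^ n x :=
    hHpow.eventually (eventually_gt_nhds (Real.exp_pos _))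
  have hHpos : ∀ᶠ x in F, (0:ℝ) < H x := by
    filter_upwards [hn1, hHnpos] with x h1 h2
    by_contra h
    push_neg at h
    have : H x = 0 := le_antisymm h (hH0 x)
    rw [this, zero_pow (by omega)] at h2
    exact lt_irrefl 0 h2
  -- n log H → -1
  have hnlogH : Tendsto (fun x => (n x : ℝ) * Real.log (H x)) F (𝓝 (-1)) := by
    have hc : Tendsto (fun x => Real.log (H x ^ n x)) F (𝓝 (Real.log (Real.exp (-1)))) :=
      (Real.continuousAt_log (Real.exp_pos _).ne').tendsto.comp hHpow
    rw [Real.log_exp] at hc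
    refine hc.congr (fun x => ?_)
    rw [Real.log_pow]
  -- H → 1
  have hninv : Tendsto (fun x => ((n x : ℝ))⁻¹) F (𝓝 0) :=
    tendsto_inv_atTop_zero.comp (tendsto_natCast_atTop_iff.2 hntop)
  have hlogH0 : Tendsto (fun x => Real.log (H x)) F (𝓝 0) := by
    have h := hnlogH.mul hninv
    rw [show (-1:ℝ) * 0 = 0 by ring] at h
    refine h.congr' (hn1.mono fun x hx => ?_)
    have hne : (n x : ℝ) ≠ 0 := by positivity
    field_simp
  have hHto1 : Tendsto H F (𝓝 1) := by
    have h := (Real.continuous_exp.tendsto _).comp hlogH0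
    rw [Real.exp_zero] at h
    refine h.congr' (hHpos.mono fun x hx => ?_)
    simp [Function.comp, Real.exp_log hx]
  -- log H < 0 eventually (so H ≠ 1)
  have hlogHneg : ∀ᶠ x in F, Real.log (H x) < 0 := by
    have h := hnlogH.eventually (eventually_lt_nhds (by norm_num : (-1:ℝ) < -1/2))
    filter_upwards [h, hn1] with x hx h1
    by_contra hc
    push_neg at hc
    have : (0:ℝ) ≤ (n x : ℝ) * Real.log (H x) := mul_nonneg (by positivity) hc
    linarith
  have hHne1 : ∀ᶠ x in F, H x ≠ 1 := by
    filter_upwards [hlogHneg] with x hx h1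
    rw [h1, Real.log_one] at hx
    exact lt_irrefl 0 hx
  -- slope limit for H
  have hHslope : Tendsto (fun x => Real.log (H x) / (H x - 1)) F (𝓝 1) := by
    refine log_slope_limit.comp ?_
    rw [tendsto_nhdsWithin_iff]
    exact ⟨hHto1, hHne1⟩
  have hHslopeinv : Tendsto (fun x => (H x - 1) / Real.log (H x)) F (𝓝 1) := by
    have h := hHslope.inv₀ one_ne_zero
    rw [inv_one] at h
    refine h.congr (fun x => ?_)
    rw [← one_div, one_div_div]
  -- n(1-H) → 1
  have hn1H : Tendsto (fun x => (n x : ℝ) * (1 - H x)) F (𝓝 1) := by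
    have h := (hnlogH.mul hHslopeinv).neg
    rw [show -((-1:ℝ) * 1) = 1 by ring] at h
    refine h.congr' (hlogHneg.mono fun x hx => ?_)
    have hne : Real.log (H x) ≠ 0 := ne_of_lt hx
    field_simp
    ring
  -- conclude
  have hfinal := hn1H.div hn1G one_ne_zero
  rw [show (1:ℝ) / 1 = 1 by norm_num] at hfinal
  refine hfinal.congr' (hn1.mono fun x hx => ?_)
  have hne : (n x : ℝ) ≠ 0 := by positivity
  simp only [Pi.div_apply]
  rw [mul_div_mul_left _ _ hne]
end
end
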